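/- Let x, y ∈ ℝ with x ≥ 0 and y ≥ 0. Then max over p ∈ [0,1] of 2^{p·x + (1−p)·y + h(p)} equals 2^x + 2^y, where h(p) = −p·log₂ p − (1−p)·log₂(1−p) is the binary entropy function (with 0·log₂ 0 = 0). -/

import Mathlib

open scoped BigOperators
open scoped Classical
open scoped ComplexOrder

noncomputable section

namespace CVZ

variable {k : ℕ}

/-- A concrete `k`-tensor over `F` with index types `I i`: the coefficient array
(in the standard bases) of a multilinear map `V₁ × ⋯ × V_k → F` with `dim V_i = |I i|`. -/
abbrev Tensor (F : Type*) (I : Fin k → Type*) : Type _ := (∀ i, I i) → F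

section Basic

variable {F : Type*} [Field F] {I J : Fin k → Type*}
  [∀ i, Fintype (I i)] [∀ i, DecidableEq (I i)]
  [∀ i, Fintype (J i)] [∀ i, DecidableEq (J i)]

/-- Coefficient array of the restriction `f ∘ (A₁, …, A_k)`, where `A_i : W_i → V_i`
is given by the matrix `A i`. -/
def restrictBy (A : ∀ i, Matrix (I i) (J i) F) (t : Tensor F I) : Tensor F J :=
  fun β => ∑ α : ∀ i, I i, (∏ i, A i (α i) (β i)) * t α

/-- `t` restricts to `s`. -/
def Restricts (t : Tensor F I) (s : Tensor F J) : Prop :=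
  ∃ A : ∀ i, Matrix (I i) (J i) F, restrictBy A t = s

/-- A choice of bases of the spaces `V_i`, encoded as a tuple of invertible matrices. -/
def IsBasisTuple (B : ∀ i, Matrix (I i) (I i) F) : Prop := ∀ i, IsUnit (B i)

/-- Support of a tensor (with respect to the standard bases). -/
def supp (t : Tensor F I) : Set (∀ i, I i) := {α | t α ≠ 0}

end Basic

section Entropy

/-- A probability distribution on the finite set `X`. -/
def IsProbDist {X : Type*} [Fintype X] (P : X → ℝ) : Prop :=
  (∀ x, 0 ≤ P x) ∧ ∑ x, P x = 1

/-- Base-2 Shannon entropy. -/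
def H2 {X : Type*} [Fintype X] (P : X → ℝ) : ℝ :=
  ∑ x, -(P x * Real.logb 2 (P x))

variable {I : Fin k → Type*} [∀ i, Fintype (I i)] [∀ i, DecidableEq (I i)]

/-- The `i`-th marginal of a distribution on a product set. -/
def marg (P : (∀ i, I i) → ℝ) (i : Fin k) : I i → ℝ :=
  fun a => ∑ α : ∀ i, I i, if α i = a then P α else 0

/-- `H_θ(P)`, the `θ`-weighted average of the marginal entropies. -/
def Hw (θ : Fin k → ℝ) (P : (∀ i, I i) → ℝ) : ℝ :=
  ∑ i, θ i * H2 (marg P i)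

/-- `H_θ(Φ)`, the supremum of `H_θ(P)` over distributions `P` supported on `Φ`. -/
def HwSet (θ : Fin k → ℝ) (Φ : Set (∀ i, I i)) : ℝ :=
  sSup {h | ∃ P : (∀ i, I i) → ℝ, IsProbDist P ∧ (∀ α, P α ≠ 0 → α ∈ Φ) ∧ h = Hw θ P}

/-- Maximal points of a subset of the product order. -/
def maxPoints [∀ i, LinearOrder (I i)] (Φ : Set (∀ i, I i)) : Set (∀ i, I i) :=
  {α | α ∈ Φ ∧ ∀ β ∈ Φ, ¬ α < β}

end Entropy

section SuppFunc

variable {F : Type*} [Field F] {I : Fin k → Type*} [∀ i, Fintype (I i)] [∀ i, DecidableEq (I i)]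

/-- The logarithmic Strassen upper support functional `ρ^θ`. -/
def rhoUpper (θ : Fin k → ℝ) (t : Tensor F I) : ℝ :=
  sInf {h | ∃ B : ∀ i, Matrix (I i) (I i) F, IsBasisTuple B ∧
    h = HwSet θ (supp (restrictBy B t))}

/-- The Strassen upper support functional `ζ^θ`. -/
def zetaUpper (θ : Fin k → ℝ) (t : Tensor F I) : ℝ :=
  if t = 0 then 0 else (2 : ℝ) ^ rhoUpper θ t

/-- The logarithmic Strassen lower support functional `ρ_θ`. -/
def rhoLower [∀ i, LinearOrder (I i)] (θ : Fin k → ℝ) (t : Tensor F I) : ℝ :=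
  sSup {h | ∃ B : ∀ i, Matrix (I i) (I i) F, IsBasisTuple B ∧
    h = HwSet θ (maxPoints (supp (restrictBy B t)))}

/-- The Strassen lower support functional `ζ_θ`. -/
def zetaLower [∀ i, LinearOrder (I i)] (θ : Fin k → ℝ) (t : Tensor F I) : ℝ :=
  if t = 0 then 0 else (2 : ℝ) ^ rhoLower θ t

/-- The instability of a tensor. -/
def instab (t : Tensor F I) : ℝ :=
  sSup {ε : ℝ | 0 ≤ ε ∧ ∃ B : ∀ i, Matrix (I i) (I i) F, IsBasisTuple B ∧
    ∃ w : ∀ i, I i → ℝ, (∀ i x, 0 ≤ w i x) ∧ (∀ i, ∃ x, w i x ≠ 0) ∧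
      ∀ a ∈ supp (restrictBy B t), ∑ i, w i (a i) ≤
        ∑ i, ((∑ x : I i, w i x) / (Fintype.card (I i) : ℝ) - ε * ⨆ x : I i, w i x)}

end SuppFunc

section Ops

variable {F : Type*} [Field F]

/-- The unit tensor `⟨r⟩`. -/
def unitTensor (F : Type*) [Field F] (k r : ℕ) : Tensor F (fun _ : Fin k => Fin r) :=
  fun α => if ∀ i j : Fin k, α i = α j then 1 else 0

variable {n m : Fin k → ℕ}

/-- Direct sum of two tensors, with the concatenated (naturally ordered) bases. -/
def dirSumFin (s : Tensor F fun i => Fin (n i)) (t : Tensor F fun i => Fin (m i)) :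
    Tensor F fun i => Fin (n i + m i) :=
  fun α =>
    (if h : ∀ i, (α i : ℕ) < n i then s (fun i => ⟨(α i : ℕ), h i⟩) else 0) +
    (if h : ∀ i, n i ≤ (α i : ℕ) then
      t (fun i => ⟨(α i : ℕ) - n i, by have h1 := (α i).isLt; have h2 := h i; omega⟩) else 0)

/-- Tensor (Kronecker) product of two tensors, with the product bases ordered naturally. -/
def tensMulFin (s : Tensor F fun i => Fin (n i)) (t : Tensor F fun i => Fin (m i)) :
    Tensor F fun i => Fin (n i * m i) :=
  fun α =>
    s (fun i => ⟨(α i : ℕ) / m i, by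
      have h := (α i).isLt
      exact Nat.div_lt_of_lt_mul (lt_of_lt_of_le h (Nat.mul_comm (n i) (m i)).le)⟩) *
    t (fun i => ⟨(α i : ℕ) % m i, by
      have h := (α i).isLt
      have hpos : 0 < n i * m i := Nat.lt_of_le_of_lt (Nat.zero_le _) h
      have hm : 0 < m i := by
        rcases Nat.eq_zero_or_pos (m i) with h0 | h0
        · simp [h0] at hpos
        · exact h0
      exact Nat.mod_lt _ hm⟩)

/-- The `N`-th tensor power of a tensor (grouping the legs into `k` groups). -/
def tpow {I : Fin k → Type*} (t : Tensor F I) (N : ℕ) : Tensor F fun i => Fin N → I i :=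
  fun α => ∏ j : Fin N, t fun i => α i j

end Ops

section Subrank

variable {F : Type*} [Field F] {I : Fin k → Type*} [∀ i, Fintype (I i)] [∀ i, DecidableEq (I i)]

/-- The subrank `Q(t)` of a tensor: the largest `r` with `⟨r⟩ ≤ t`. -/
def Qtensor (t : Tensor F I) : ℕ :=
  sSup {r : ℕ | Restricts t (unitTensor F k r)}

/-- A slice: a tensor of the form `v ⊗ w` with `v` in the `j`-th leg. -/
def IsSlice (s : Tensor F I) : Prop :=
  ∃ (j : Fin k) (v : I j → F) (w : (∀ i : {i : Fin k // i ≠ j}, I i.1) → F),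
    ∀ α, s α = v (α j) * w (fun i => α i.1)

/-- The slice rank of a tensor. -/
def sliceRank (t : Tensor F I) : ℕ :=
  sInf {r : ℕ | ∃ c : Fin r → Tensor F I, (∀ a, IsSlice (c a)) ∧ t = ∑ a, c a}

end Subrank

section Combinatorial

variable {I : Fin k → Type*}

/-- A diagonal: any two distinct elements differ in all coordinates. -/
def IsDiagonal (D : Set (∀ i, I i)) : Prop :=
  ∀ a ∈ D, ∀ b ∈ D, a ≠ b → ∀ i, a i ≠ b i

/-- The `i`-th projection of a set of tuples. -/
def projSet (D : Set (∀ i, I i)) (i : Fin k) : Set (I i) := {x | ∃ a ∈ D, a i = x}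

/-- A free diagonal in `Φ`: a diagonal `D` with `D = Φ ∩ (D₁ × ⋯ × D_k)`. -/
def IsFreeDiagonal (D Φ : Set (∀ i, I i)) : Prop :=
  IsDiagonal D ∧ D = Φ ∩ {a | ∀ i, a i ∈ projSet D i}

/-- The (combinatorial) subrank of a set: the maximal size of a free diagonal. -/
def Qset (Φ : Set (∀ i, I i)) : ℕ :=
  sSup {r : ℕ | ∃ D : Set (∀ i, I i), IsFreeDiagonal D Φ ∧ D.ncard = r}

/-- The `N`-fold coordinatewise power of a set of tuples. -/
def setPow (Φ : Set (∀ i, I i)) (N : ℕ) : Set (∀ i, Fin N → I i) :=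
  {α | ∀ j : Fin N, (fun i => α i j) ∈ Φ}

/-- A tight set. -/
def TightSet (Φ : Set (∀ i, I i)) : Prop :=
  ∃ u : ∀ i, I i → ℤ, (∀ i, Function.Injective (u i)) ∧ ∀ α ∈ Φ, ∑ i, u i (α i) = 0

/-- `Φ` is a combinatorial degeneration of `Ψ` (written `Ψ ⊵ Φ`). -/
def CombDegen (Ψ Φ : Set (∀ i, I i)) : Prop :=
  Φ ⊆ Ψ ∧ ∃ u : ∀ i, I i → ℤ,
    (∀ α ∈ Φ, ∑ i, u i (α i) = 0) ∧ ∀ α ∈ Ψ, α ∉ Φ → 0 < ∑ i, u i (α i)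

end Combinatorial

/-- A tight tensor: some basis tuple gives a tight support. -/
def TightTensor {F : Type*} [Field F] {I : Fin k → Type*} [∀ i, Fintype (I i)]
    [∀ i, DecidableEq (I i)] (t : Tensor F I) : Prop :=
  ∃ B : ∀ i, Matrix (I i) (I i) F, IsBasisTuple B ∧ TightSet (supp (restrictBy B t))

/-- A complete (decreasing) flag of subspaces, `W 0 = ⊤` and `dim (W j) = dim V − j`. -/
def IsCompleteFlag (F : Type*) [Field F] {V : Type*} [AddCommGroup V] [Module F V]
    (W : ℕ → Submodule F V) : Prop :=
  Antitone W ∧ W 0 = ⊤ ∧ ∀ j : ℕ, Module.finrank F (W j) = Module.finrank F V - j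

/-- Evaluation of (the multilinear map associated with) `t` at a tuple of vectors. -/
def eval {F : Type*} [Field F] {I : Fin k → Type*} [∀ i, Fintype (I i)] [∀ i, DecidableEq (I i)]
    (t : Tensor F I) (v : ∀ i, I i → F) : F :=
  ∑ α : ∀ i, I i, (∏ i, v i (α i)) * t α

/-- The support of `t` with respect to a tuple of complete flags. -/
def suppFlag {F : Type*} [Field F] {n : Fin k → ℕ} (t : Tensor F fun i => Fin (n i))
    (W : ∀ i, ℕ → Submodule F (Fin (n i) → F)) : Set (∀ i, Fin (n i)) :=
  {α | ∃ v : ∀ i, Fin (n i) → F, (∀ i, v i ∈ W i (α i : ℕ)) ∧ eval t v ≠ 0}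

section Quantum

variable {I : Fin k → Type*} [∀ i, Fintype (I i)] [∀ i, DecidableEq (I i)]

/-- Von Neumann entropy (base 2) of a Hermitian matrix. -/
def vnEntropy {d : Type*} [Fintype d] [DecidableEq d] (ρ : Matrix d d ℂ) : ℝ :=
  if h : ρ.IsHermitian then ∑ x, -(h.eigenvalues x * Real.logb 2 (h.eigenvalues x)) else 0

/-- The `j`-th marginal (reduced density matrix) of the pure state `|t⟩⟨t| / ⟨t|t⟩`. -/
def margMat (t : Tensor ℂ I) (j : Fin k) : Matrix (I j) (I j) ℂ :=
  fun a b =>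
    (∑ α : ∀ i, I i, ∑ β : ∀ i, I i,
      if α j = a ∧ β j = b ∧ (∀ i, i ≠ j → α i = β i) then t α * star (t β) else 0) /
    ∑ α : ∀ i, I i, t α * star (t α)

/-- The logarithmic lower quantum functional `E_θ` for `θ` a distribution on `[k]`. -/
def Ewq (θ : Fin k → ℝ) (t : Tensor ℂ I) : ℝ :=
  sSup {h | ∃ A : ∀ i, Matrix (I i) (I i) ℂ, IsBasisTuple A ∧
    h = ∑ j, θ j * vnEntropy (margMat (restrictBy A t) j)}

/-- The marginal (reduced density matrix) on the legs in `S` of the pure state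
`|t⟩⟨t| / ⟨t|t⟩`. -/
def margMatSet (t : Tensor ℂ I) (S : Finset (Fin k)) :
    Matrix (∀ i : {x : Fin k // x ∈ S}, I i.1) (∀ i : {x : Fin k // x ∈ S}, I i.1) ℂ :=
  fun a b =>
    (∑ α : ∀ i, I i, ∑ β : ∀ i, I i,
      if (∀ (i : Fin k) (hi : i ∈ S), α i = a ⟨i, hi⟩ ∧ β i = b ⟨i, hi⟩) ∧
         (∀ i, i ∉ S → α i = β i)
      then t α * star (t β) else 0) /
    ∑ α : ∀ i, I i, t α * star (t α)

/-- A probability distribution on the bipartitions `{S, S̄}` of `[k]` (encoded by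
choosing a representative `S` for each bipartition occurring in the support). -/
def IsBipDist (θ : Finset (Fin k) → ℝ) : Prop :=
  (∀ S, 0 ≤ θ S) ∧ (∀ S, θ S ≠ 0 → S.Nonempty ∧ Sᶜ.Nonempty) ∧
    ∑ S : Finset (Fin k), θ S = 1

/-- The logarithmic lower quantum functional `E_θ` for `θ` a distribution on bipartitions. -/
def EwqBip (θ : Finset (Fin k) → ℝ) (t : Tensor ℂ I) : ℝ :=
  sSup {h | ∃ A : ∀ i, Matrix (I i) (I i) ℂ, IsBasisTuple A ∧
    h = ∑ S : Finset (Fin k), θ S * vnEntropy (margMatSet (restrictBy A t) S)}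

/-- The lower quantum functional `F_θ`. -/
def FwqBip (θ : Finset (Fin k) → ℝ) (t : Tensor ℂ I) : ℝ :=
  if t = 0 then 0 else (2 : ℝ) ^ EwqBip θ t

/-- Degeneration: `t` lies in the closure of the `GL × ⋯ × GL`-orbit of `s`. -/
def Degen (s t : Tensor ℂ I) : Prop :=
  t ∈ closure {u : Tensor ℂ I | ∃ A : ∀ i, Matrix (I i) (I i) ℂ,
    IsBasisTuple A ∧ restrictBy A s = u}

end Quantum

/-- Trace norm of a complex matrix: `Tr √(AᴴA)`. -/
def traceNorm {d : Type*} [Fintype d] [DecidableEq d] (A : Matrix d d ℂ) : ℝ :=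
  (((Matrix.posSemidef_conjTranspose_mul_self A).1.eigenvectorUnitary : Matrix d d ℂ) *
    Matrix.diagonal (fun i => ((Real.sqrt ((Matrix.posSemidef_conjTranspose_mul_self A).1.eigenvalues i) : ℝ) : ℂ)) *
    (star (Matrix.posSemidef_conjTranspose_mul_self A).1.eigenvectorUnitary : Matrix d d ℂ)).trace.re

/-- `conjIter ρ X j = X_j ⋯ X_2 X_1 ρ X_1 X_2 ⋯ X_j`. -/
def conjIter {d : Type*} [Fintype d] (ρ : Matrix d d ℂ) {n : ℕ}
    (X : Fin n → Matrix d d ℂ) : ℕ → Matrix d d ℂ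
  | 0 => ρ
  | (j + 1) => if h : j < n then X ⟨j, h⟩ * conjIter ρ X j * X ⟨j, h⟩ else conjIter ρ X j

/-- A tricolored sum-free set in `G × G × G`. -/
def IsTriColoredSumFree {G : Type*} [AddCommGroup G] (Γ : Set (G × G × G)) : Prop :=
  (∀ a ∈ Γ, ∀ b ∈ Γ, a ≠ b → a.1 ≠ b.1 ∧ a.2.1 ≠ b.2.1 ∧ a.2.2 ≠ b.2.2) ∧
  ∀ x y z : G, (∃ a ∈ Γ, a.1 = x) → (∃ a ∈ Γ, a.2.1 = y) → (∃ a ∈ Γ, a.2.2 = z) →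
    (x + y + z = 0 ↔ (x, y, z) ∈ Γ)

/-- The maximal size `s₃(G)` of a tricolored sum-free set in `G × G × G`. -/
def s3 (G : Type*) [AddCommGroup G] : ℕ :=
  sSup {r : ℕ | ∃ Γ : Set (G × G × G), IsTriColoredSumFree Γ ∧ Γ.ncard = r}

/-- Binary entropy function (base 2), with the convention `0 · log 0 = 0`. -/
def binH (p : ℝ) : ℝ := -(p * Real.logb 2 p) - (1 - p) * Real.logb 2 (1 - p)

open Filter Topology

/-!
Put `a = 2^x`, `b = 2^y`. For `p ∈ [0,1]` one has
`2^{p x + (1-p) y + h(p)} = (a/p)^p (b/(1-p))^{1-p}`, and weighted AM-GM bounds this by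
`p (a/p) + (1-p) (b/(1-p)) ≤ a + b`, with equality when `a/p = b/(1-p)`, i.e. at `p = a/(a+b)`.
-/

lemma rpow_neg_mul_logb_self {b p : ℝ} (hb : 0 < b) (hb1 : b ≠ 1) (hp : 0 ≤ p) :
    b ^ (-(p * Real.logb b p)) = (p ^ p)⁻¹ := by
  rcases hp.eq_or_lt with rfl | hp
  · simp
  rw [← neg_mul, mul_comm, Real.rpow_mul hb.le, Real.rpow_logb hb hb1 hp, Real.rpow_neg hp.le]

lemma two_rpow_binH {p : ℝ} (hp0 : 0 ≤ p) (hp1 : p ≤ 1) :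
    (2 : ℝ) ^ binH p = (p ^ p)⁻¹ * ((1 - p) ^ (1 - p))⁻¹ := by
  rw [binH, sub_eq_add_neg, Real.rpow_add two_pos,
    rpow_neg_mul_logb_self two_pos (by norm_num) hp0,
    rpow_neg_mul_logb_self two_pos (by norm_num) (sub_nonneg.2 hp1)]

/-- At `p = 0` the factor `(2 ^ x / p) ^ p` is `0 ^ 0 = 1`, matching `h 0 = 0`; likewise at
`p = 1`. -/
lemma two_rpow_mix_add_binH (x y : ℝ) {p : ℝ} (hp0 : 0 ≤ p) (hp1 : p ≤ 1) :
    (2 : ℝ) ^ (p * x + (1 - p) * y + binH p) =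
      ((2 : ℝ) ^ x / p) ^ p * ((2 : ℝ) ^ y / (1 - p)) ^ (1 - p) := by
  have h2 : (0 : ℝ) ≤ 2 := by norm_num
  rw [Real.rpow_add two_pos, Real.rpow_add two_pos, two_rpow_binH hp0 hp1, mul_comm p,
    mul_comm (1 - p), Real.rpow_mul h2, Real.rpow_mul h2,
    Real.div_rpow (Real.rpow_nonneg h2 x) hp0,
    Real.div_rpow (Real.rpow_nonneg h2 y) (sub_nonneg.2 hp1)]
  ring

lemma mul_div_le_of_nonneg {K : Type*} [Field K] [Preorder K] {a p : K} (ha : 0 ≤ a) :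
    p * (a / p) ≤ a := by
  rcases eq_or_ne p 0 with rfl | hp
  · simpa using ha
  · rw [mul_div_cancel₀ a hp]

lemma div_rpow_mul_div_rpow_le_add {a b p : ℝ} (ha : 0 ≤ a) (hb : 0 ≤ b)
    (hp0 : 0 ≤ p) (hp1 : p ≤ 1) :
    (a / p) ^ p * (b / (1 - p)) ^ (1 - p) ≤ a + b :=
  calc (a / p) ^ p * (b / (1 - p)) ^ (1 - p)
      ≤ p * (a / p) + (1 - p) * (b / (1 - p)) :=
        Real.geom_mean_le_arith_mean2_weighted hp0 (sub_nonneg.2 hp1)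
          (div_nonneg ha hp0) (div_nonneg hb (sub_nonneg.2 hp1)) (add_sub_cancel p 1)
    _ ≤ a + b := add_le_add (mul_div_le_of_nonneg ha) (mul_div_le_of_nonneg hb)

lemma div_rpow_mul_div_rpow_eq_add {a b : ℝ} (ha : 0 < a) (hb : 0 < b) :
    (a / (a / (a + b))) ^ (a / (a + b)) * (b / (1 - a / (a + b))) ^ (1 - a / (a + b)) =
      a + b := by
  have hab : 0 < a + b := add_pos ha hb
  have h1 : a / (a / (a + b)) = a + b := by field_simp
  have h2 : b / (1 - a / (a + b)) = a + b := by
    rw [one_sub_div hab.ne', add_sub_cancel_left]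
    field_simp
  rw [h1, h2, ← Real.rpow_add hab, add_sub_cancel, Real.rpow_one]

theorem statement7_general (x y : ℝ) :
    IsGreatest ((fun p => (2 : ℝ) ^ (p * x + (1 - p) * y + binH p)) '' Set.Icc 0 1)
      ((2 : ℝ) ^ x + (2 : ℝ) ^ y) := by
  have ha : (0 : ℝ) < 2 ^ x := Real.rpow_pos_of_pos two_pos x
  have hb : (0 : ℝ) < 2 ^ y := Real.rpow_pos_of_pos two_pos y
  have hp0 : 0 ≤ (2 : ℝ) ^ x / (2 ^ x + 2 ^ y) := by positivity
  have hp1 : (2 : ℝ) ^ x / (2 ^ x + 2 ^ y) ≤ 1 :=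
    div_le_one_of_le₀ (le_add_of_nonneg_right hb.le) (by positivity)
  refine ⟨⟨2 ^ x / (2 ^ x + 2 ^ y), ⟨hp0, hp1⟩, ?_⟩, ?_⟩
  · dsimp only
    rw [two_rpow_mix_add_binH x y hp0 hp1]
    exact div_rpow_mul_div_rpow_eq_add ha hb
  · rintro _ ⟨p, ⟨hp0, hp1⟩, rfl⟩
    dsimp only
    rw [two_rpow_mix_add_binH x y hp0 hp1]
    exact div_rpow_mul_div_rpow_le_add ha.le hb.le hp0 hp1

/-- `max_{p ∈ [0,1]} 2^{px + (1-p)y + h(p)} = 2^x + 2^y`. -/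
theorem statement7 (x y : ℝ) (hx : 0 ≤ x) (hy : 0 ≤ y) :
    IsGreatest ((fun p => (2 : ℝ) ^ (p * x + (1 - p) * y + binH p)) '' Set.Icc 0 1)
      ((2 : ℝ) ^ x + (2 : ℝ) ^ y) :=
  statement7_general x y

end CVZ

end
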